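/- arXiv:1201.4061 — 4 statements merged into one kernel-verified Lean document; each statement's English description precedes it below -/
import Mathlib

section
/- The polynomial p(x,y,z) = x^2y^2(x-y)^2 + y^2z^2(y-z)^2 + z^2x^2(z-x)^2 + xyz(x-y)(y-z)(z-x) is nonnegative on ℝ^3. -/
theorem reznick_poly_nonneg (x y z : ℝ) :
    0 ≤ x^2*y^2*(x-y)^2 + y^2*z^2*(y-z)^2 + z^2*x^2*(z-x)^2
        + x*y*z*(x-y)*(y-z)*(z-x) := by
  nlinarith [sq_nonneg (x*y*(x-y) - y*z*(y-z)), sq_nonneg (y*z*(y-z) - z*x*(z-x)),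
    sq_nonneg (z*x*(z-x) - x*y*(x-y)), sq_nonneg (x*y*(x-y) + y*z*(y-z) + z*x*(z-x) - x*y*z),
    sq_nonneg (x*y*(x-y) - x*y*z), sq_nonneg (y*z*(y-z) - x*y*z), sq_nonneg (z*x*(z-x) - x*y*z),
    sq_nonneg (x*y*(x-y) + y*z*(y-z) + z*x*(z-x)), sq_nonneg (x*y*z)]
end

section
/- The polynomial p(x,y,z) = x^2y^2(x-y)^2 + y^2z^2(y-z)^2 + z^2x^2(z-x)^2 + xyz(x-y)(y-z)(z-x) vanishes exactly at the seven projective points represented by (1,0,0), (0,1,0), (0,0,1), (1,1,0), (1,0,1), (0,1,1), (1,1,1); in particular it vanishes at each of these points. -/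
private lemma amgm3 (u v w : ℝ) (hu : 0 ≤ u) (hv : 0 ≤ v) (hw : 0 ≤ w) :
    27 * (u * v * w) ≤ (u + v + w)^3 := by
  nlinarith [sq_nonneg (u - v), sq_nonneg (v - w), sq_nonneg (u - w),
    mul_nonneg hu hv, mul_nonneg hv hw, mul_nonneg hu hw,
    mul_nonneg (mul_nonneg hu hv) hw]

-- main auxiliary: if s = a²+b²+c² and s² = -abc(a+b+c) then a=b=c=0
set_option maxHeartbeats 1000000 in
private lemma abc_zero (a b c : ℝ)
    (h : (a^2 + b^2 + c^2)^2 = -(a*b*c*(a+b+c))) :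
    a = 0 ∧ b = 0 ∧ c = 0 := by
  have h1 : 27 * (a^2 * b^2 * c^2) ≤ (a^2 + b^2 + c^2)^3 :=
    amgm3 _ _ _ (sq_nonneg a) (sq_nonneg b) (sq_nonneg c)
  have h2 : (a + b + c)^2 ≤ 3 * (a^2 + b^2 + c^2) := by nlinarith [sq_nonneg (a-b), sq_nonneg (b-c), sq_nonneg (a-c)]
  have hs : 0 ≤ a^2 + b^2 + c^2 := by positivity
  -- s⁴ = (abc)²(a+b+c)² ≤ (s³/27)(3s) = s⁴/9
  have h4 : (a^2 + b^2 + c^2)^4 = (a*b*c)^2 * (a+b+c)^2 := by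
    rw [show (a^2+b^2+c^2)^4 = ((a^2+b^2+c^2)^2)^2 by ring, h]; ring
  have h5 : (a*b*c)^2 * (a+b+c)^2 ≤ ((a^2+b^2+c^2)^3 / 27) * (3 * (a^2+b^2+c^2)) := by
    have hA : (a*b*c)^2 ≤ (a^2+b^2+c^2)^3 / 27 := by nlinarith [h1]
    exact mul_le_mul hA h2 (sq_nonneg _) (by positivity)
  have h6 : (a^2+b^2+c^2)^4 ≤ (a^2+b^2+c^2)^4 / 9 := by nlinarith [h4, h5]
  have h6' : (a^2+b^2+c^2)^4 ≤ 0 := by nlinarith [h6]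
  have h6'' : (a^2+b^2+c^2)^4 = 0 := le_antisymm h6' (by positivity)
  have h7 : a^2 + b^2 + c^2 = 0 := by
    have := pow_eq_zero_iff (n := 4) (by norm_num) |>.mp h6''
    exact this
  refine ⟨by nlinarith [sq_nonneg b, sq_nonneg c, sq_nonneg a],
    by nlinarith [sq_nonneg b, sq_nonneg c, sq_nonneg a],
    by nlinarith [sq_nonneg b, sq_nonneg c, sq_nonneg a]⟩

theorem reznick_poly_zeros
    (p : ℝ → ℝ → ℝ → ℝ)
    (hp : ∀ x y z, p x y z = x^2*y^2*(x-y)^2 + y^2*z^2*(y-z)^2 + z^2*x^2*(z-x)^2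
            + x*y*z*(x-y)*(y-z)*(z-x)) :
    (p 1 0 0 = 0 ∧ p 0 1 0 = 0 ∧ p 0 0 1 = 0 ∧ p 1 1 0 = 0 ∧ p 1 0 1 = 0 ∧
     p 0 1 1 = 0 ∧ p 1 1 1 = 0) ∧
    (∀ x y z : ℝ, ¬ (x = 0 ∧ y = 0 ∧ z = 0) →
      (p x y z = 0 ↔ ∃ t : ℝ, t ≠ 0 ∧
        ((x,y,z) = (t,0,0) ∨ (x,y,z) = (0,t,0) ∨ (x,y,z) = (0,0,t) ∨
         (x,y,z) = (t,t,0) ∨ (x,y,z) = (t,0,t) ∨ (x,y,z) = (0,t,t) ∨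
         (x,y,z) = (t,t,t)))) := by
  constructor
  · refine ⟨?_, ?_, ?_, ?_, ?_, ?_, ?_⟩ <;> rw [hp] <;> norm_num
  · intro x y z hnz
    constructor
    · intro h0
      set a := x*y*(x-y) with hadef
      set b := y*z*(y-z) with hbdef
      set c := z*x*(z-x) with hcdef
      have hpq : a^2 + b^2 + c^2 = -(x*y*z*(x-y)*(y-z)*(z-x)) := by
        have := hp x y z
        rw [h0] at this
        rw [hadef, hbdef, hcdef]; nlinarith [this]
      have hq2 : (x*y*z*(x-y)*(y-z)*(z-x))^2 = -(a*b*c*(a+b+c)) := by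
        rw [hadef, hbdef, hcdef]; ring
      have hkey : (a^2 + b^2 + c^2)^2 = -(a*b*c*(a+b+c)) := by
        rw [hpq, ← hq2]; ring
      obtain ⟨ha, hb, hc⟩ := abc_zero a b c hkey
      rw [hadef] at ha; rw [hbdef] at hb; rw [hcdef] at hc
      by_cases hx : x = 0
      · subst hx
        rcases mul_eq_zero.mp hb with hb' | hyz
        · rcases mul_eq_zero.mp hb' with hy | hz
          · -- y = 0, so z ≠ 0 : (0,0,t)
            subst hy
            have hz : z ≠ 0 := fun h => hnz ⟨rfl, rfl, h⟩
            exact ⟨z, hz, Or.inr (Or.inr (Or.inl rfl))⟩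
          · -- z = 0, y ≠ 0 : (0,t,0)
            subst hz
            have hy : y ≠ 0 := fun h => hnz ⟨rfl, h, rfl⟩
            exact ⟨y, hy, Or.inr (Or.inl rfl)⟩
        · -- y = z
          have hyz' : y = z := by linarith [sub_eq_zero.mp hyz]
          subst hyz'
          have hy : y ≠ 0 := fun h => hnz ⟨rfl, h, h⟩
          exact ⟨y, hy, Or.inr (Or.inr (Or.inr (Or.inr (Or.inr (Or.inl rfl)))))⟩
      · -- x ≠ 0
        have ha' : y * (x - y) = 0 := by
          rcases mul_eq_zero.mp ha with h' | h'
          · rcases mul_eq_zero.mp h' with h'' | h''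
            · exact absurd h'' hx
            · rw [h'']; ring
          · rw [h']; ring
        rcases mul_eq_zero.mp ha' with hy | hxy
        · -- y = 0
          subst hy
          have hc' : z * (z - x) = 0 := by
            rcases mul_eq_zero.mp hc with h' | h'
            · rcases mul_eq_zero.mp h' with h'' | h''
              · rw [h'']; ring
              · exact absurd h'' hx
            · rw [h']; ring
          rcases mul_eq_zero.mp hc' with hz | hzx
          · subst hz; exact ⟨x, hx, Or.inl rfl⟩
          · have hzx' : z = x := by linarith [sub_eq_zero.mp hzx]
            subst hzx'
            exact ⟨z, hx, Or.inr (Or.inr (Or.inr (Or.inr (Or.inl rfl))))⟩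
        · -- x = y
          have hxy' : x = y := by linarith [sub_eq_zero.mp hxy]
          subst hxy'
          have hb' : z * (x - z) = 0 := by
            rcases mul_eq_zero.mp hb with h' | h'
            · rcases mul_eq_zero.mp h' with h'' | h''
              · exact absurd h'' hx
              · rw [h'']; ring
            · rw [h']; ring
          rcases mul_eq_zero.mp hb' with hz | hxz
          · subst hz
            exact ⟨x, hx, Or.inr (Or.inr (Or.inr (Or.inl rfl)))⟩
          · have hxz' : x = z := by linarith [sub_eq_zero.mp hxz]
            subst hxz'
            exact ⟨x, hx, Or.inr (Or.inr (Or.inr (Or.inr (Or.inr (Or.inr rfl)))))⟩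
    · rintro ⟨t, ht, h | h | h | h | h | h | h⟩ <;>
        (rw [Prod.mk.injEq, Prod.mk.injEq] at h; obtain ⟨h1, h2, h3⟩ := h;
         subst h1; subst h2; subst h3; rw [hp]; ring)
end

section
/- Suppose A = {v_1,…,v_7} is a set of seven distinct points in ℝ^4 such that no four of them lie on a projective plane, and suppose q_1, q_2, q_3 form a basis of the vector space of homogeneous quadratic forms in ℝ[x_1,…,x_4] vanishing on all points of A. Then q_1, q_2, q_3 have no common non-unit factor. -/
open MvPolynomial

private lemma degAdd (u v : Fin 4 →₀ ℕ) :
    Finsupp.degree (u + v) = Finsupp.degree u + Finsupp.degree v := by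
  simp [Finsupp.degree_eq_weight_one, map_add]

/-- component multiplicativity at the sum of lower bounds -/
private lemma comp_mul_min (g h : MvPolynomial (Fin 4) ℝ) (a b : ℕ)
    (ha : ∀ u : Fin 4 →₀ ℕ, u.degree < a → coeff u g = 0)
    (hb : ∀ v : Fin 4 →₀ ℕ, v.degree < b → coeff v h = 0) :
    homogeneousComponent (a + b) (g * h) =
      homogeneousComponent a g * homogeneousComponent b h := by
  classical
  ext d
  by_cases hd : d.degree = a + b
  · rw [coeff_homogeneousComponent, if_pos hd, coeff_mul, coeff_mul]
    apply Finset.sum_congr rfl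
    rintro ⟨u, v⟩ huv
    rw [Finset.HasAntidiagonal.mem_antidiagonal] at huv
    dsimp only
    have hsum : u.degree + v.degree = a + b := by rw [← degAdd, huv, hd]
    rw [coeff_homogeneousComponent, coeff_homogeneousComponent]
    rcases lt_trichotomy u.degree a with hlt | heq | hgt
    · rw [ha u hlt, if_neg (show ¬ u.degree = a by omega)]; simp
    · rw [if_pos heq, if_pos (show v.degree = b by omega)]
    · rw [hb v (show v.degree < b by omega), if_neg (show ¬ u.degree = a by omega)]; simp
  · rw [coeff_homogeneousComponent, if_neg hd]
    exact (((homogeneousComponent_isHomogeneous a g).mul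
      (homogeneousComponent_isHomogeneous b h)).coeff_eq_zero hd).symm

/-- component multiplicativity at the sum of upper bounds -/
private lemma comp_mul_max (g h : MvPolynomial (Fin 4) ℝ) (a b : ℕ)
    (ha : ∀ u : Fin 4 →₀ ℕ, a < u.degree → coeff u g = 0)
    (hb : ∀ v : Fin 4 →₀ ℕ, b < v.degree → coeff v h = 0) :
    homogeneousComponent (a + b) (g * h) =
      homogeneousComponent a g * homogeneousComponent b h := by
  classical
  ext d
  by_cases hd : d.degree = a + b
  · rw [coeff_homogeneousComponent, if_pos hd, coeff_mul, coeff_mul]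
    apply Finset.sum_congr rfl
    rintro ⟨u, v⟩ huv
    rw [Finset.HasAntidiagonal.mem_antidiagonal] at huv
    dsimp only
    have hsum : u.degree + v.degree = a + b := by rw [← degAdd, huv, hd]
    rw [coeff_homogeneousComponent, coeff_homogeneousComponent]
    rcases lt_trichotomy u.degree a with hlt | heq | hgt
    · rw [hb v (show b < v.degree by omega), if_neg (show ¬ v.degree = b by omega)]; simp
    · rw [if_pos heq, if_pos (show v.degree = b by omega)]
    · rw [ha u hgt, if_neg (show ¬ u.degree = a by omega)]; simp
  · rw [coeff_homogeneousComponent, if_neg hd]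
    exact (((homogeneousComponent_isHomogeneous a g).mul
      (homogeneousComponent_isHomogeneous b h)).coeff_eq_zero hd).symm

private lemma factor_homogeneous {g h : MvPolynomial (Fin 4) ℝ} {n : ℕ}
    (hgh : (g * h).IsHomogeneous n) (hg : g ≠ 0) (hh : h ≠ 0) :
    ∃ a b : ℕ, a + b = n ∧ g.IsHomogeneous a ∧ h.IsHomogeneous b := by
  classical
  have hzero : ∀ m : ℕ, m ≠ n → homogeneousComponent m (g * h) = 0 := by
    intro m hm
    ext d
    rw [coeff_homogeneousComponent, coeff_zero]
    split_ifs with hdm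
    · exact hgh.coeff_eq_zero (by omega)
    · rfl
  set A := g.support.image Finsupp.degree with hA
  set B := h.support.image Finsupp.degree with hB
  have hAne : A.Nonempty := (Finset.image_nonempty).mpr (support_nonempty.mpr hg)
  have hBne : B.Nonempty := (Finset.image_nonempty).mpr (support_nonempty.mpr hh)
  -- bounds
  have hgub : ∀ u : Fin 4 →₀ ℕ, A.max' hAne < u.degree → coeff u g = 0 := by
    intro u hu
    by_contra hc
    exact absurd (Finset.le_max' A u.degree (Finset.mem_image_of_mem _ (by simpa using hc)))
      (by omega)
  have hglb : ∀ u : Fin 4 →₀ ℕ, u.degree < A.min' hAne → coeff u g = 0 := by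
    intro u hu
    by_contra hc
    exact absurd (Finset.min'_le A u.degree (Finset.mem_image_of_mem _ (by simpa using hc)))
      (by omega)
  have hhub : ∀ v : Fin 4 →₀ ℕ, B.max' hBne < v.degree → coeff v h = 0 := by
    intro v hv
    by_contra hc
    exact absurd (Finset.le_max' B v.degree (Finset.mem_image_of_mem _ (by simpa using hc)))
      (by omega)
  have hhlb : ∀ v : Fin 4 →₀ ℕ, v.degree < B.min' hBne → coeff v h = 0 := by
    intro v hv
    by_contra hc
    exact absurd (Finset.min'_le B v.degree (Finset.mem_image_of_mem _ (by simpa using hc)))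
      (by omega)
  -- nonvanishing of extreme components
  have hcompne : ∀ (p : MvPolynomial (Fin 4) ℝ) (m : ℕ),
      (∃ d ∈ p.support, Finsupp.degree d = m) → homogeneousComponent m p ≠ 0 := by
    rintro p m ⟨d, hd, hdm⟩ hc
    have := coeff_homogeneousComponent (σ := Fin 4) (R := ℝ) m p d
    rw [hc, coeff_zero, if_pos hdm] at this
    exact (mem_support_iff.mp hd) this.symm
  have hgmax : ∃ d ∈ g.support, Finsupp.degree d = A.max' hAne := by
    simpa [hA, eq_comm] using Finset.max'_mem A hAne
  have hgmin : ∃ d ∈ g.support, Finsupp.degree d = A.min' hAne := by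
    simpa [hA, eq_comm] using Finset.min'_mem A hAne
  have hhmax : ∃ d ∈ h.support, Finsupp.degree d = B.max' hBne := by
    simpa [hB, eq_comm] using Finset.max'_mem B hBne
  have hhmin : ∃ d ∈ h.support, Finsupp.degree d = B.min' hBne := by
    simpa [hB, eq_comm] using Finset.min'_mem B hBne
  have hmaxeq : A.max' hAne + B.max' hBne = n := by
    by_contra hc
    have := hzero _ hc
    rw [comp_mul_max g h _ _ hgub hhub] at this
    exact mul_ne_zero (hcompne g _ hgmax) (hcompne h _ hhmax) this
  have hmineq : A.min' hAne + B.min' hBne = n := by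
    by_contra hc
    have := hzero _ hc
    rw [comp_mul_min g h _ _ hglb hhlb] at this
    exact mul_ne_zero (hcompne g _ hgmin) (hcompne h _ hhmin) this
  have hAle : A.min' hAne ≤ A.max' hAne := Finset.min'_le A _ (Finset.max'_mem A hAne)
  have hBle : B.min' hBne ≤ B.max' hBne := Finset.min'_le B _ (Finset.max'_mem B hBne)
  have hAeq : A.min' hAne = A.max' hAne := by omega
  refine ⟨A.max' hAne, B.max' hBne, hmaxeq, ?_, ?_⟩
  · intro d hd
    rw [show (Finsupp.weight (1 : Fin 4 → ℕ) : (Fin 4 →₀ ℕ) →+ ℕ) = Finsupp.weight (fun _ => 1) from rfl, ← Finsupp.degree_eq_weight_one]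
    have h1 : A.min' hAne ≤ d.degree := by
      by_contra hc; exact hd (hglb d (by omega))
    have h2 : d.degree ≤ A.max' hAne := by
      by_contra hc; exact hd (hgub d (by omega))
    omega
  · intro d hd
    rw [show (Finsupp.weight (1 : Fin 4 → ℕ) : (Fin 4 →₀ ℕ) →+ ℕ) = Finsupp.weight (fun _ => 1) from rfl, ← Finsupp.degree_eq_weight_one]
    have h1 : B.min' hBne ≤ d.degree := by
      by_contra hc; exact hd (hhlb d (by omega))
    have h2 : d.degree ≤ B.max' hBne := by
      by_contra hc; exact hd (hhub d (by omega))
    omega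

private lemma four_distinct (T : Finset (Fin 7)) (hT : 4 ≤ T.card) :
    ∃ i ∈ T, ∃ j ∈ T, ∃ k ∈ T, ∃ l ∈ T,
      i ≠ j ∧ i ≠ k ∧ i ≠ l ∧ j ≠ k ∧ j ≠ l ∧ k ≠ l := by
  classical
  have hT0 : 0 < T.card := by omega
  obtain ⟨i, hi⟩ := Finset.card_pos.mp hT0
  have h1 : 3 ≤ (T.erase i).card := by
    have := Finset.card_erase_of_mem hi; omega
  have hT1 : 0 < (T.erase i).card := by omega
  obtain ⟨j, hj⟩ := Finset.card_pos.mp hT1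
  have h2 : 2 ≤ ((T.erase i).erase j).card := by
    have := Finset.card_erase_of_mem hj; omega
  have hT2 : 0 < ((T.erase i).erase j).card := by omega
  obtain ⟨k, hk⟩ := Finset.card_pos.mp hT2
  have h3 : 1 ≤ (((T.erase i).erase j).erase k).card := by
    have := Finset.card_erase_of_mem hk; omega
  have hT3 : 0 < (((T.erase i).erase j).erase k).card := by omega
  obtain ⟨l, hl⟩ := Finset.card_pos.mp hT3
  obtain ⟨hlk, hl'⟩ := Finset.mem_erase.mp hl
  obtain ⟨hlj, hl''⟩ := Finset.mem_erase.mp hl'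
  obtain ⟨hli, hlT⟩ := Finset.mem_erase.mp hl''
  obtain ⟨hkj, hk'⟩ := Finset.mem_erase.mp hk
  obtain ⟨hki, hkT⟩ := Finset.mem_erase.mp hk'
  obtain ⟨hji, hjT⟩ := Finset.mem_erase.mp hj
  exact ⟨i, hi, j, hjT, k, hkT, l, hlT, (Ne.symm hji), (Ne.symm hki), (Ne.symm hli),
    (Ne.symm hkj), (Ne.symm hlj), (Ne.symm hlk)⟩

theorem seven_points_quadrics_coprime
    (v : Fin 7 → (Fin 4 → ℝ)) (hv : Function.Injective v)
    (hgen : ∀ i j k l : Fin 7, i ≠ j → i ≠ k → i ≠ l → j ≠ k → j ≠ l → k ≠ l →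
      ¬ ∃ g : MvPolynomial (Fin 4) ℝ, g ≠ 0 ∧ g.IsHomogeneous 1 ∧
        eval (v i) g = 0 ∧ eval (v j) g = 0 ∧ eval (v k) g = 0 ∧ eval (v l) g = 0)
    (q : Fin 3 → MvPolynomial (Fin 4) ℝ)
    (hqhom : ∀ i, (q i).IsHomogeneous 2)
    (hqvan : ∀ i, ∀ j, eval (v j) (q i) = 0)
    (hind : LinearIndependent ℝ q)
    (hspan : ∀ p : MvPolynomial (Fin 4) ℝ, p.IsHomogeneous 2 →
      (∀ j, eval (v j) p = 0) →
      ∃ c : Fin 3 → ℝ, p = ∑ i, c i • q i) :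
    ∀ g : MvPolynomial (Fin 4) ℝ, g ∣ q 0 → g ∣ q 1 → g ∣ q 2 → IsUnit g := by
  classical
  intro g hd0 hd1 hd2
  have hqne : ∀ i, q i ≠ 0 := fun i => hind.ne_zero i
  obtain ⟨h0, hq0⟩ := hd0
  obtain ⟨h1, hq1⟩ := hd1
  have hgne : g ≠ 0 := by rintro rfl; exact hqne 0 (by rw [hq0, zero_mul])
  have hh0ne : h0 ≠ 0 := by rintro rfl; exact hqne 0 (by rw [hq0, mul_zero])
  have hh1ne : h1 ≠ 0 := by rintro rfl; exact hqne 1 (by rw [hq1, mul_zero])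
  obtain ⟨a, b, hab, hga, hh0b⟩ := factor_homogeneous (hq0 ▸ hqhom 0) hgne hh0ne
  obtain ⟨a', b', hab', hga', hh1b'⟩ := factor_homogeneous (hq1 ▸ hqhom 1) hgne hh1ne
  have haa' : a = a' := hga.inj_right hga' hgne
  by_contra hunit
  -- a ≠ 0 : otherwise g is a nonzero constant, hence a unit
  have ha0 : a ≠ 0 := by
    rintro rfl
    apply hunit
    have hgC : g = C (coeff 0 g) := by
      ext d
      rcases eq_or_ne d 0 with rfl | hd
      · simp
      · rw [hga.coeff_eq_zero (fun hdeg => hd ((Finsupp.degree_eq_zero_iff d).mp hdeg))]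
        rw [coeff_C, if_neg (by exact fun h => hd h.symm)]
    rw [hgC]
    exact (isUnit_iff_ne_zero.mpr (by
      intro hc
      exact hgne (by rw [hgC, hc, map_zero]))).map C
  have ha12 : a = 1 ∨ a = 2 := by omega
  rcases ha12 with rfl | rfl
  · -- a = 1 : linear common factor
    -- each h i is homogeneous of degree 1
    obtain ⟨h2, hq2⟩ := hd2
    have hh2ne : h2 ≠ 0 := by rintro rfl; exact hqne 2 (by rw [hq2, mul_zero])
    obtain ⟨a'', b'', hab'', hga'', hh2b''⟩ := factor_homogeneous (hq2 ▸ hqhom 2) hgne hh2ne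
    have haa'' : (1 : ℕ) = a'' := hga.inj_right hga'' hgne
    have hb0 : b = 1 := by omega
    subst hb0
    -- points where g does not vanish
    set S : Finset (Fin 7) := Finset.univ.filter (fun j => eval (v j) g = 0) with hS
    have hScard : S.card ≤ 3 := by
      by_contra hc
      obtain ⟨i, hi, j, hj, k, hk, l, hl, hij, hik, hil, hjk, hjl, hkl⟩ :=
        four_distinct S (by omega)
      have hmem : ∀ m ∈ S, eval (v m) g = 0 := by
        intro m hm; exact (Finset.mem_filter.mp hm).2
      exact hgen i j k l hij hik hil hjk hjl hkl
        ⟨g, hgne, hga, hmem i hi, hmem j hj, hmem k hk, hmem l hl⟩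
    have hTcard : 4 ≤ Sᶜ.card := by
      have := Finset.card_compl S
      simp only [Fintype.card_fin] at this
      omega
    obtain ⟨i, hi, j, hj, k, hk, l, hl, hij, hik, hil, hjk, hjl, hkl⟩ :=
      four_distinct Sᶜ hTcard
    have hmem : ∀ m ∈ Sᶜ, eval (v m) h0 = 0 := by
      intro m hm
      have hg : eval (v m) g ≠ 0 := by
        intro hc
        rw [Finset.mem_compl, hS, Finset.mem_filter] at hm
        exact hm ⟨Finset.mem_univ m, hc⟩
      have := hqvan 0 m
      rw [hq0, eval_mul] at this
      exact (mul_eq_zero.mp this).resolve_left hg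
    exact hgen i j k l hij hik hil hjk hjl hkl
      ⟨h0, hh0ne, hh0b, hmem i hi, hmem j hj, hmem k hk, hmem l hl⟩
  · -- a = 2 : then h0, h1 are constants and q 0, q 1 proportional
    have hb0 : b = 0 := by omega
    have hb1 : b' = 0 := by omega
    subst hb0
    have hb1' : b' = 0 := hb1
    -- h0 and h1 are constants
    have hC : ∀ (p : MvPolynomial (Fin 4) ℝ), p.IsHomogeneous 0 → p = C (coeff 0 p) := by
      intro p hp
      ext d
      rcases eq_or_ne d 0 with rfl | hd
      · simp
      · rw [hp.coeff_eq_zero (fun hdeg => hd ((Finsupp.degree_eq_zero_iff d).mp hdeg)),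
          coeff_C, if_neg (by exact fun h => hd h.symm)]
    have hh0C := hC h0 hh0b
    have hh1C := hC h1 (hb1' ▸ hh1b')
    set c0 := coeff 0 h0
    set c1 := coeff 0 h1
    have hc0 : c0 ≠ 0 := by intro hc; exact hh0ne (by rw [hh0C, hc, map_zero])
    have hc1 : c1 ≠ 0 := by intro hc; exact hh1ne (by rw [hh1C, hc, map_zero])
    -- c1 • q 0 - c0 • q 1 = 0, contradicting linear independence
    have hrel : c1 • q 0 - c0 • q 1 = 0 := by
      rw [hq0, hq1, hh0C, hh1C]
      ring_nf
      rw [smul_eq_C_mul, smul_eq_C_mul]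
      ring
    have := Fintype.linearIndependent_iff.mp hind
      (fun i => if i = 0 then c1 else if i = 1 then -c0 else 0) (by
        rw [Fin.sum_univ_three]
        simp only [Fin.isValue, if_true, if_false]
        norm_num
        rw [← sub_eq_zero] at hrel ⊢
        simpa [sub_eq_add_neg, neg_smul] using hrel) 0
    simp at this
    exact hc1 this
end

section
/- Let v_1,…,v_9 ∈ ℝ^3 and u_1,…,u_9 ∈ ℝ be nonzero real numbers such that Σ_{j=1}^9 u_j f(v_j) = 0 for every homogeneous cubic f. Let a_1,…,a_9 be nonzero reals with Σ_{j=1}^9 u_j^2/a_j = 0, where a_1,…,a_8 > 0 and a_9 < 0. Then for every homogeneous cubic f, Σ_{j=1}^9 a_j f(v_j)^2 ≥ 0. -/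
/-!
Write `c j = f(v j)`. The cubic `f` itself is a valid test polynomial, so `∑ u_j c_j = 0`, i.e.
`∑_{j<8} u_j c_j = -u_8 c_8`. Weighted Cauchy–Schwarz over the positive weights gives
`u_8² c_8² ≤ S · ∑_{j<8} a_j c_j²` with `S = ∑_{j<8} u_j²/a_j = -u_8²/a_8 > 0`,
which rearranges to `∑_{j<8} a_j c_j² ≥ -a_8 c_8²`.
-/

open MvPolynomial Finset

variable {ι R : Type*} [Field R] [LinearOrder R] [IsStrictOrderedRing R]

theorem Finset.sq_sum_mul_le_sum_sq_div_mul_sum_mul_sq (s : Finset ι) (u c : ι → R) {a : ι → R}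
    (ha : ∀ i ∈ s, 0 < a i) :
    (∑ i ∈ s, u i * c i) ^ 2 ≤ (∑ i ∈ s, u i ^ 2 / a i) * ∑ i ∈ s, a i * c i ^ 2 :=
  sum_sq_le_sum_mul_sum_of_sq_le_mul s
    (fun i hi => div_nonneg (sq_nonneg _) (ha i hi).le)
    (fun i hi => mul_nonneg (ha i hi).le (sq_nonneg _))
    (fun i hi => le_of_eq <| by field_simp [(ha i hi).ne'])

theorem sum_mul_sq_nonneg_of_sum_mul_eq_zero [Fintype ι] [DecidableEq ι] (k : ι)
    {u a c : ι → R} (hpos : ∀ i ≠ k, 0 < a i) (hneg : a k < 0) (huk : u k ≠ 0)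
    (hua : ∑ i, u i ^ 2 / a i = 0) (huc : ∑ i, u i * c i = 0) :
    0 ≤ ∑ i, a i * c i ^ 2 := by
  have hpos' : ∀ i ∈ univ.erase k, 0 < a i := fun i hi => hpos i (ne_of_mem_erase hi)
  set S := ∑ i ∈ univ.erase k, u i ^ 2 / a i
  set T := ∑ i ∈ univ.erase k, a i * c i ^ 2
  rw [← add_sum_erase _ _ (mem_univ k)] at hua huc ⊢
  have hS : S * a k = -u k ^ 2 := by
    field_simp [hneg.ne] at hua
    linarith
  have hS_pos : 0 < S := by nlinarith [sq_pos_of_ne_zero huk]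
  have hCS : (u k * c k) ^ 2 ≤ S * T := by
    rw [← neg_sq, ← eq_neg_of_add_eq_zero_right huc]
    exact sq_sum_mul_le_sum_sq_div_mul_sum_mul_sq _ u c hpos'
  have hST : 0 ≤ S * (a k * c k ^ 2 + T) := by nlinarith
  exact nonneg_of_mul_nonneg_right (by linarith) hS_pos

theorem extreme_ray_nonneg_on_squares_general
    (v : Fin 9 → (Fin 3 → ℝ)) (u : Fin 9 → ℝ) (hu : ∀ j, u j ≠ 0)
    (hCB : ∀ f : MvPolynomial (Fin 3) ℝ, f.IsHomogeneous 3 →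
      ∑ j, u j * eval (v j) f = 0)
    (a : Fin 9 → ℝ)
    (hapos : ∀ j : Fin 9, (j : ℕ) < 8 → 0 < a j) (haneg : a 8 < 0)
    (hsum : ∑ j, (u j)^2 / a j = 0)
    (f : MvPolynomial (Fin 3) ℝ) (hf : f.IsHomogeneous 3) :
    0 ≤ ∑ j, a j * (eval (v j) f)^2 := by
  refine sum_mul_sq_nonneg_of_sum_mul_eq_zero 8 (fun j hj => hapos j ?_) haneg (hu 8) hsum
    (hCB f hf)
  have hj8 : (j : ℕ) ≠ 8 := fun h => hj (Fin.ext h)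
  omega

theorem extreme_ray_nonneg_on_squares
    (v : Fin 9 → (Fin 3 → ℝ)) (u : Fin 9 → ℝ) (hu : ∀ j, u j ≠ 0)
    (hCB : ∀ f : MvPolynomial (Fin 3) ℝ, f.IsHomogeneous 3 →
      ∑ j, u j * eval (v j) f = 0)
    (a : Fin 9 → ℝ) (ha0 : ∀ j, a j ≠ 0)
    (hapos : ∀ j : Fin 9, (j : ℕ) < 8 → 0 < a j) (haneg : a 8 < 0)
    (hsum : ∑ j, (u j)^2 / a j = 0)
    (f : MvPolynomial (Fin 3) ℝ) (hf : f.IsHomogeneous 3) :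
    0 ≤ ∑ j, a j * (eval (v j) f)^2 :=
  extreme_ray_nonneg_on_squares_general v u hu hCB a hapos haneg hsum f hf
end
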